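/- Let d ≥ 1 and 1 ≤ k ≤ d be integers, let x ∈ ℝ^d, and let S ⊆ {1,…,d} be a top-k coordinate set for x, i.e. |S| = k and |x_i| ≥ |x_j| for every i ∈ S and j ∉ S. Then the squared Euclidean error of the top-k sparsifier satisfies ‖mask_S(x) − x‖² ≤ (1 − k/d)·‖x‖²; equivalently, Σ_{j ∉ S} x_j² ≤ (1 − k/d)·Σ_{j=1}^{d} x_j². -/

import Mathlib

/-!
Write `A` and `B` for the mass `∑ x_i²` on `S` and on its complement. Every square in `S`
dominates every square outside `S`, so double counting over `S × Sᶜ` gives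
`k · B ≤ (d - k) · A`; adding `(d - k) · B` to both sides yields `d · B ≤ (d - k) · ‖x‖²`.
-/

/-- The masked vector `mask S x` has `j`-th coordinate `x j` if `j ∈ S` and `0` otherwise. -/
def mask {d : ℕ} (S : Finset (Fin d)) (x : EuclideanSpace ℝ (Fin d)) :
    EuclideanSpace ℝ (Fin d) :=
  WithLp.toLp 2 (fun j => if j ∈ S then x j else 0)

open Finset

theorem Finset.card_nsmul_sum_le_card_nsmul_sum {ι M : Type*} [AddCommMonoid M] [PartialOrder M]
    [IsOrderedAddMonoid M] {s t : Finset ι} {f : ι → M} (h : ∀ i ∈ s, ∀ j ∈ t, f j ≤ f i) :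
    #s • ∑ j ∈ t, f j ≤ #t • ∑ i ∈ s, f i := by
  rw [← sum_const, ← sum_const, sum_comm (s := t)]
  exact sum_le_sum fun i hi => sum_le_sum fun j hj => h i hi j hj

theorem Finset.sum_compl_le_of_forall_le {ι : Type*} [Fintype ι] [DecidableEq ι] {s : Finset ι}
    {f : ι → ℝ} (h : ∀ i ∈ s, ∀ j ∉ s, f j ≤ f i) :
    ∑ j ∈ sᶜ, f j ≤ (1 - (#s : ℝ) / Fintype.card ι) * ∑ i, f i := by
  rcases isEmpty_or_nonempty ι with hι | hι
  · simp [eq_empty_of_isEmpty sᶜ]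
  have hcard : (#sᶜ : ℝ) = Fintype.card ι - #s := by
    rw [card_compl, Nat.cast_sub (card_le_univ s)]
  have hdouble : (#s : ℝ) * ∑ j ∈ sᶜ, f j ≤ #sᶜ * ∑ i ∈ s, f i := by
    simpa only [nsmul_eq_mul] using
      card_nsmul_sum_le_card_nsmul_sum fun i hi j hj => h i hi j (mem_compl.mp hj)
  have hn : (0 : ℝ) < Fintype.card ι := by exact_mod_cast Fintype.card_pos
  rw [hcard] at hdouble
  rw [← sum_add_sum_compl s, one_sub_div hn.ne', div_mul_eq_mul_div, le_div_iff₀ hn]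
  linarith

theorem norm_mask_sub_self_sq {d : ℕ} (S : Finset (Fin d)) (x : EuclideanSpace ℝ (Fin d)) :
    ‖mask S x - x‖ ^ 2 = ∑ j ∈ Sᶜ, x j ^ 2 := by
  rw [EuclideanSpace.real_norm_sq_eq, ← sum_add_sum_compl S,
    sum_eq_zero fun j hj => by simp [mask, hj], zero_add]
  exact sum_congr rfl fun j hj => by simp [mask, mem_compl.mp hj]

theorem topk_error_le_general (d k : ℕ)
    (x : EuclideanSpace ℝ (Fin d)) (S : Finset (Fin d)) (hS : S.card = k)
    (htop : ∀ i ∈ S, ∀ j ∉ S, |x j| ≤ |x i|) :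
    ‖mask S x - x‖ ^ 2 ≤ (1 - (k : ℝ) / d) * ‖x‖ ^ 2 := by
  have htail := sum_compl_le_of_forall_le (f := fun i => x i ^ 2) fun i hi j hj =>
    sq_le_sq.mpr (htop i hi j hj)
  rwa [Fintype.card_fin, hS, ← EuclideanSpace.real_norm_sq_eq, ← norm_mask_sub_self_sq] at htail

/-- For a top-`k` coordinate set `S` of `x` (i.e. `|S| = k` and `|x i| ≥ |x j|` whenever
`i ∈ S`, `j ∉ S`), the top-`k` sparsification error satisfies
`‖mask_S(x) − x‖² ≤ (1 − k/d)·‖x‖²`. -/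
theorem topk_error_le (d k : ℕ) (hd : 1 ≤ d) (hk1 : 1 ≤ k) (hkd : k ≤ d)
    (x : EuclideanSpace ℝ (Fin d)) (S : Finset (Fin d)) (hS : S.card = k)
    (htop : ∀ i ∈ S, ∀ j ∉ S, |x j| ≤ |x i|) :
    ‖mask S x - x‖ ^ 2 ≤ (1 - (k : ℝ) / d) * ‖x‖ ^ 2 :=
  topk_error_le_general d k x S hS htop
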